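/- (Theorem 2, (3) ⇒ (1)) Let X ⊆ ℝ² be a finite set in general position with exactly k convex layers that admits a nested labeling ψ which is both an internal separation and an external separation. Then X is a nested almost convex set. -/

import Mathlib

open Set

noncomputable section

/-- Points of the plane. -/
abbrev Pt : Type := ℝ × ℝ

/-- The orientation determinant of the triple `(a, b, c)`:
`c` lies strictly to the left of the directed line from `a` to `b` iff `orient a b c > 0`. -/
def orient (a b c : Pt) : ℝ :=
  (b.1 - a.1) * (c.2 - a.2) - (b.2 - a.2) * (c.1 - a.1)

/-- A set of points is in general position if no three pairwise distinct points are collinear. -/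
def GenPos (X : Set Pt) : Prop :=
  ∀ a ∈ X, ∀ b ∈ X, ∀ c ∈ X, a ≠ b → a ≠ c → b ≠ c → orient a b c ≠ 0

/-- The set of extreme points of the convex hull of `S`. -/
def extremePts (S : Set Pt) : Set Pt := Set.extremePoints ℝ (convexHull ℝ S)

/-- Remove the extreme points of the convex hull (one peeling step of convex layers). -/
def peel (S : Set Pt) : Set Pt := S \ extremePts S

/-- `X` has exactly `k` convex layers. -/
def HasLayers (X : Set Pt) (k : ℕ) : Prop :=
  peel^[k] X = ∅ ∧ ∀ j < k, peel^[j] X ≠ ∅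

/-- `X_j`, the union of the `j` innermost convex layers (when `X` has `k` layers). -/
def layerSub (X : Set Pt) (k j : ℕ) : Set Pt := peel^[k - j] X

/-- `R_j`, the `j`-th convex layer of `X` (when `X` has `k` layers), `R_1` innermost. -/
def layer (X : Set Pt) (k j : ℕ) : Set Pt := extremePts (layerSub X k j)

/-- `X` is a nested almost convex set. -/
def IsNACS (X : Set Pt) : Prop :=
  X.Finite ∧ X.Nonempty ∧ GenPos X ∧
  ∀ k, HasLayers X k →
    ∀ j, 1 ≤ j → j ≤ k →
      ∀ a ∈ layer X k j, ∀ b ∈ layer X k j, ∀ c ∈ layer X k j,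
        a ≠ b → a ≠ c → b ≠ c →
        ∃! p : Pt, p ∈ layerSub X k (j - 1) ∩ interior (convexHull ℝ ({a, b, c} : Set Pt))

/-- `q` is a counterclockwise enumeration of `S`. -/
def CCWEnum {m : ℕ} (S : Set Pt) (q : Fin m → Pt) : Prop :=
  Function.Injective q ∧ Set.range q = S ∧
  ∀ a b c : Fin m, a < b → b < c → 0 < orient (q a) (q b) (q c)

/-- The ordered pair `(q1, q2)` of points of `R` is adoptable from `p`. -/
def AdoptablePair (R : Set Pt) (p q1 q2 : Pt) : Prop :=
  ∀ q3 ∈ R \ ({q1, q2} : Set Pt), p ∈ interior (convexHull ℝ ({q1, q2, q3} : Set Pt))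

/-- The `i`-th binary string of length `j` in lexicographic order (`false` before `true`). -/
def strOfNat (j i : ℕ) : List Bool :=
  (List.range j).map fun t => i.testBit (j - 1 - t)

/-- The numeric (lexicographic) rank of a binary string among strings of its length. -/
def natOfStr (s : List Bool) : ℕ := s.foldl (fun n b => 2 * n + b.toNat) 0

/-- The leftmost `k`-level descendant of the node `s`. -/
def firstStr (k : ℕ) (s : List Bool) : List Bool := s ++ List.replicate (k - s.length) false

/-- The rightmost `k`-level descendant of the node `s`. -/
def lastStr (k : ℕ) (s : List Bool) : List Bool := s ++ List.replicate (k - s.length) true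

/-- Non-root nodes of the tree `T₁(k)`: binary strings of length `1..k`. -/
def ValidNode1 (k : ℕ) (s : List Bool) : Prop := 1 ≤ s.length ∧ s.length ≤ k

/-- A type-1 labeling of `X`, given by its label function `x` (the inverse of `ψ`). -/
def IsLabeling1 (k : ℕ) (X : Set Pt) (x : List Bool → Pt) : Prop :=
  Set.InjOn x {s | ValidNode1 k s} ∧ x '' {s | ValidNode1 k s} = X

/-- A type-1 labeling is nested. -/
def Nested1 (k : ℕ) (X : Set Pt) (x : List Bool → Pt) : Prop :=
  ∀ j, 1 ≤ j → j ≤ k →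
    CCWEnum (layer X k j) fun i : Fin (2 ^ j) => x (strOfNat j i.val)

/-- A type-1 labeling is adoptable. -/
def Adoptable1 (k : ℕ) (X : Set Pt) (x : List Bool → Pt) : Prop :=
  ∀ s : List Bool, 1 ≤ s.length → s.length + 1 ≤ k →
    AdoptablePair (layer X k (s.length + 1)) (x s) (x (s ++ [false])) (x (s ++ [true]))

/-- `previous[R_k(u)]` for a type-1 labeling: the cyclic predecessor (in the left-to-right,
i.e. counterclockwise, order of the `k`-level) of `first[R_k(u)]`. -/
def prev1 (k : ℕ) (x : List Bool → Pt) (s : List Bool) : Pt :=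
  x (strOfNat k ((natOfStr (firstStr k s) + (2 ^ k - 1)) % 2 ^ k))

/-- `next[R_k(u)]` for a type-1 labeling: the cyclic successor of `last[R_k(u)]`. -/
def next1 (k : ℕ) (x : List Bool → Pt) (s : List Bool) : Pt :=
  x (strOfNat k ((natOfStr (lastStr k s) + 1) % 2 ^ k))

/-- A type-1 labeling is well laid. -/
def WellLaid1 (k : ℕ) (x : List Bool → Pt) : Prop :=
  ∀ s : List Bool, 1 ≤ s.length → s.length ≤ k →
    x s ∈ convexHull ℝ ({prev1 k x s, x (firstStr k s), x (lastStr k s)} : Set Pt) ∧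
    x s ∈ convexHull ℝ ({x (firstStr k s), x (lastStr k s), next1 k x s} : Set Pt)

/-- `X_u` for a type-1 labeling: the labels of the proper descendants of `s`. -/
def descSet1 (k : ℕ) (x : List Bool → Pt) (s : List Bool) : Set Pt :=
  x '' {t | ValidNode1 k t ∧ s <+: t ∧ s ≠ t}

/-- `X̄_u = X_u ∪ {x_u}` for a type-1 labeling. -/
def barSet1 (k : ℕ) (x : List Bool → Pt) (s : List Bool) : Set Pt :=
  insert (x s) (descSet1 k x s)

/-- A type-1 labeling is an internal separation. -/
def InternalSep1 (k : ℕ) (X : Set Pt) (x : List Bool → Pt) : Prop :=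
  ∀ s : List Bool, s.length + 1 ≤ k →
    ∀ y ∈ X \ descSet1 k x s,
      ∀ a ∈ barSet1 k x (s ++ [false]), ∀ b ∈ barSet1 k x (s ++ [true]),
        0 < orient a b y

/-- A type-1 labeling is an external separation. -/
def ExternalSep1 (k : ℕ) (X : Set Pt) (x : List Bool → Pt) : Prop :=
  ∀ s : List Bool, 1 ≤ s.length → s.length + 1 ≤ k →
    ∀ y ∈ X \ barSet1 k x s,
      (∀ a ∈ barSet1 k x (s ++ [false]), 0 < orient a (x s) y) ∧
      (∀ b ∈ barSet1 k x (s ++ [true]), 0 < orient (x s) b y)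

/-- Nodes of the tree `T₂(k)`: the root `none`, and pairs `(c, s)`. -/
abbrev Node2 : Type := Option (Fin 3 × List Bool)

/-- Valid nodes of `T₂(k)`: the root, and pairs `(c, s)` with `|s| ≤ k - 2`. -/
def ValidNode2 (k : ℕ) : Node2 → Prop
  | none => True
  | some (_, s) => s.length + 2 ≤ k

/-- A type-2 labeling of `X`, given by its label function `x` (the inverse of `ψ`). -/
def IsLabeling2 (k : ℕ) (X : Set Pt) (x : Node2 → Pt) : Prop :=
  Set.InjOn x {u | ValidNode2 k u} ∧ x '' {u | ValidNode2 k u} = X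

/-- The `i`-th node (left-to-right) of the `(j+2)`-level of `T₂(k)`. -/
def node2At (j i : ℕ) : Node2 :=
  some (⟨i / 2 ^ j % 3, by omega⟩, strOfNat j (i % 2 ^ j))

/-- A type-2 labeling is nested. -/
def Nested2 (k : ℕ) (X : Set Pt) (x : Node2 → Pt) : Prop :=
  CCWEnum (layer X k 1) (fun _ : Fin 1 => x none) ∧
  ∀ j : ℕ, j + 2 ≤ k →
    CCWEnum (layer X k (j + 2)) fun i : Fin (3 * 2 ^ j) => x (node2At j i.val)

/-- A type-2 labeling is adoptable. -/
def Adoptable2 (k : ℕ) (X : Set Pt) (x : Node2 → Pt) : Prop :=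
  ∀ (c : Fin 3) (s : List Bool), s.length + 3 ≤ k →
    AdoptablePair (layer X k (s.length + 3)) (x (some (c, s)))
      (x (some (c, s ++ [false]))) (x (some (c, s ++ [true])))

/-- `previous[R_k(u)]` for a type-2 labeling, `u = (c, s)`. -/
def prev2 (k : ℕ) (x : Node2 → Pt) (c : Fin 3) (s : List Bool) : Pt :=
  x (node2At (k - 2)
      ((c.val * 2 ^ (k - 2) + natOfStr (firstStr (k - 2) s) + (3 * 2 ^ (k - 2) - 1)) %
        (3 * 2 ^ (k - 2))))

/-- `next[R_k(u)]` for a type-2 labeling, `u = (c, s)`. -/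
def next2 (k : ℕ) (x : Node2 → Pt) (c : Fin 3) (s : List Bool) : Pt :=
  x (node2At (k - 2)
      ((c.val * 2 ^ (k - 2) + natOfStr (lastStr (k - 2) s) + 1) % (3 * 2 ^ (k - 2))))

/-- A type-2 labeling is well laid (the root is the only node with `R_k(u) = R_k`). -/
def WellLaid2 (k : ℕ) (x : Node2 → Pt) : Prop :=
  ∀ (c : Fin 3) (s : List Bool), s.length + 2 ≤ k →
    x (some (c, s)) ∈ convexHull ℝ
      ({prev2 k x c s, x (some (c, firstStr (k - 2) s)),
        x (some (c, lastStr (k - 2) s))} : Set Pt) ∧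
    x (some (c, s)) ∈ convexHull ℝ
      ({x (some (c, firstStr (k - 2) s)), x (some (c, lastStr (k - 2) s)),
        next2 k x c s} : Set Pt)

/-- `X_u` for a type-2 labeling and a non-root node `u = (c, s)`. -/
def descSet2 (k : ℕ) (x : Node2 → Pt) (c : Fin 3) (s : List Bool) : Set Pt :=
  x '' {u | ∃ t : List Bool, u = some (c, t) ∧ t.length + 2 ≤ k ∧ s <+: t ∧ s ≠ t}

/-- `X̄_u = X_u ∪ {x_u}` for a type-2 labeling and a non-root node `u = (c, s)`. -/
def barSet2 (k : ℕ) (x : Node2 → Pt) (c : Fin 3) (s : List Bool) : Set Pt :=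
  insert (x (some (c, s))) (descSet2 k x c s)

/-- A type-2 labeling is an internal separation. -/
def InternalSep2 (k : ℕ) (X : Set Pt) (x : Node2 → Pt) : Prop :=
  (∀ (c : Fin 3) (s : List Bool), s.length + 3 ≤ k →
    ∀ y ∈ X \ descSet2 k x c s,
      ∀ a ∈ barSet2 k x c (s ++ [false]), ∀ b ∈ barSet2 k x c (s ++ [true]),
        0 < orient a b y) ∧
  (∀ i : Fin 3,
    ∀ y ∈ X \ (barSet2 k x i [] ∪ barSet2 k x (i + 1) []),
      ∀ a ∈ barSet2 k x i [], ∀ b ∈ barSet2 k x (i + 1) [],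
        0 < orient a b y)

/-- A type-2 labeling is an external separation. -/
def ExternalSep2 (k : ℕ) (X : Set Pt) (x : Node2 → Pt) : Prop :=
  ∀ (c : Fin 3) (s : List Bool), s.length + 3 ≤ k →
    ∀ y ∈ X \ barSet2 k x c s,
      (∀ a ∈ barSet2 k x c (s ++ [false]), 0 < orient a (x (some (c, s))) y) ∧
      (∀ b ∈ barSet2 k x c (s ++ [true]), 0 < orient (x (some (c, s))) b y)

/-- One corner-refinement step: from `α_s = (q, o, p)` to `α_{s0}` (for `b = false`)
or `α_{s1}` (for `b = true`). -/
def cornerStep (α : Pt × Pt × Pt) (b : Bool) : Pt × Pt × Pt :=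
  let q := α.1
  let o := α.2.1
  let p := α.2.2
  if b then (o + (1 / 5 : ℝ) • (q - o), o + (1 / 5 : ℝ) • (p - o), o + (2 / 5 : ℝ) • (p - o))
  else (o + (2 / 5 : ℝ) • (q - o), o + (1 / 5 : ℝ) • (q - o), o + (1 / 5 : ℝ) • (p - o))

/-- The corner `α_s = (q_s, o_s, p_s)` assigned to the binary string `s` (with parameter `k`). -/
def corner (k : ℕ) (s : List Bool) : Pt × Pt × Pt :=
  s.foldl cornerStep
    (((0 : ℝ), (2 * 5 ^ (k + 1) : ℝ)), ((0 : ℝ), (0 : ℝ)), ((2 * 5 ^ (k + 1) : ℝ), (0 : ℝ)))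

/-- The point `y_v` for a binary string `v = s ++ [b]` of positive length. -/
def ypt (k : ℕ) (v : List Bool) : Pt :=
  let α := corner k v.dropLast
  if v.getLastD false then α.2.1 + (1 / 5 : ℝ) • (α.2.2 - α.2.1)
  else α.2.1 + (1 / 5 : ℝ) • (α.1 - α.2.1)

/-- The point `x_s`: the midpoint of `y_{s·0^(k+1−|s|)}` and `y_{s·1^(k+1−|s|)}`. -/
def xpt (k : ℕ) (s : List Bool) : Pt :=
  (1 / 2 : ℝ) •
    (ypt k (s ++ List.replicate (k + 1 - s.length) false) +
      ypt k (s ++ List.replicate (k + 1 - s.length) true))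

/-!
Read the labels of a binary tree in in-order (left subtree, node, right subtree). If `a` precedes
`b` and `m` is their longest common prefix, then internal separation at `m` (when `a`, `b` lie in
the two subtrees of `m`) or external separation at `m` (when one of them is `m`) puts every point
outside the subtree of `m` strictly to the left of the line from `x_a` to `x_b`.

Three vertices of a layer `R_j` are the labels of three leaves of depth `j`; two of them branch at
a node `u`, and the third branches off above `u`. Comparing a candidate node with the leaves in
in-order, one of the three sides of the triangle always separates it from the triangle, except
for `u` itself, whose label lies inside. In a type-2 labeling whose three vertices lie in different
branches of the root, the separation (ii) at the root plays the same role and the root is the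
point inside.
-/

lemma orient_rotate (a b c : Pt) : orient b c a = orient a b c := by
  simp only [orient]; ring

lemma orient_swap (a b c : Pt) : orient b a c = -orient a b c := by
  simp only [orient]; ring

lemma orient_swap_right (a b c : Pt) : orient a c b = -orient a b c := by
  simp only [orient]; ring

lemma orient_add_orient_add_orient (a b c p : Pt) :
    orient b c p + orient c a p + orient a b p = orient a b c := by
  simp only [orient]; ring

lemma convex_setOf_orient_nonneg (a b : Pt) : Convex ℝ {p | 0 ≤ orient a b p} := by
  intro p hp q hq s t hs ht hst
  have hcomb : orient a b (s • p + t • q) = s * orient a b p + t * orient a b q := by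
    simp only [orient, Prod.fst_add, Prod.snd_add, Prod.smul_fst, Prod.smul_snd, smul_eq_mul]
    linear_combination (a.2 * (b.1 - a.1) - a.1 * (b.2 - a.2)) * hst
  rw [Set.mem_ofPred_eq, hcomb]
  exact add_nonneg (mul_nonneg hs hp) (mul_nonneg ht hq)

lemma isOpenMap_orient {a b : Pt} (hab : a ≠ b) : IsOpenMap (orient a b) := by
  let L : Pt →ₗ[ℝ] ℝ :=
    (b.1 - a.1) • LinearMap.snd ℝ ℝ ℝ - (b.2 - a.2) • LinearMap.fst ℝ ℝ ℝ
  have hL : Function.Surjective L := by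
    refine LinearMap.surjective_of_ne_zero fun h0 => hab ?_
    have h1 := LinearMap.congr_fun h0 (1, 0)
    have h2 := LinearMap.congr_fun h0 (0, 1)
    simp only [LinearMap.sub_apply, LinearMap.smul_apply, LinearMap.snd_apply, smul_eq_mul,
      mul_zero, LinearMap.fst_apply, mul_one, zero_sub, neg_sub, LinearMap.zero_apply, sub_zero,
      L] at h1 h2
    exact Prod.ext (by linarith) (by linarith)
  have hfun : orient a b = (· + ((b.2 - a.2) * a.1 - (b.1 - a.1) * a.2)) ∘ L := by
    funext p
    simp only [orient, Function.comp_apply, LinearMap.sub_apply, LinearMap.smul_apply,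
      LinearMap.snd_apply, smul_eq_mul, LinearMap.fst_apply, L]
    ring
  rw [hfun]
  exact (Homeomorph.addRight _).isOpenMap.comp (L.isOpenMap_of_finiteDimensional hL)

lemma continuous_orient (a b : Pt) : Continuous (orient a b) := by
  unfold orient; fun_prop

lemma interior_convexHull_subset_orient_pos {a b c : Pt} (habc : 0 < orient a b c) :
    interior (convexHull ℝ {a, b, c}) ⊆ {p | 0 < orient a b p} := by
  have hab : a ≠ b := by rintro rfl; simp [orient] at habc
  have hhull : convexHull ℝ {a, b, c} ⊆ {p | 0 ≤ orient a b p} := by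
    refine convexHull_min ?_ (convex_setOf_orient_nonneg a b)
    rintro p (rfl | rfl | rfl)
    · exact (show orient p b p = 0 by simp only [orient]; ring).ge
    · exact (show orient a p p = 0 by simp only [orient]; ring).ge
    · exact habc.le
  calc interior (convexHull ℝ {a, b, c}) ⊆ interior {p | 0 ≤ orient a b p} :=
        interior_mono hhull
    _ = orient a b ⁻¹' interior (Set.Ici 0) :=
        ((isOpenMap_orient hab).preimage_interior_eq_interior_preimage
          (continuous_orient a b) _).symm
    _ = {p | 0 < orient a b p} := by rw [interior_Ici]; rfl

lemma mem_convexHull_of_orient_pos {a b c p : Pt} (h₁ : 0 < orient a b p)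
    (h₂ : 0 < orient b c p) (h₃ : 0 < orient c a p) : p ∈ convexHull ℝ {a, b, c} := by
  have hsum := orient_add_orient_add_orient a b c p
  have hmem := Finset.centerMass_mem_convexHull (s := ({a, b, c} : Set Pt)) Finset.univ
    (w := ![orient b c p, orient c a p, orient a b p]) (z := ![a, b, c])
    (by intro i _; fin_cases i; exacts [h₂.le, h₃.le, h₁.le])
    (by rw [Fin.sum_univ_three]; exact hsum ▸ (by linarith : 0 < orient a b c))
    (by intro i _; fin_cases i <;> simp)
  convert hmem using 1
  have hne : orient a b c ≠ 0 := by linarith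
  simp only [Finset.centerMass, Fin.sum_univ_three, Matrix.cons_val_zero, Matrix.cons_val_one,
    Matrix.cons_val_two, Matrix.head_cons, Matrix.tail_cons, hsum]
  ext <;> simp only [Prod.smul_fst, Prod.smul_snd, Prod.fst_add, Prod.snd_add, smul_eq_mul] <;>
    field_simp <;> simp only [orient] <;> ring

lemma mem_interior_triangle_iff {a b c p : Pt} (habc : 0 < orient a b c) :
    p ∈ interior (convexHull ℝ {a, b, c}) ↔
      0 < orient a b p ∧ 0 < orient b c p ∧ 0 < orient c a p := by
  have hbca : ({a, b, c} : Set Pt) = {b, c, a} := by rw [Set.insert_comm, Set.pair_comm]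
  have hcab : ({b, c, a} : Set Pt) = {c, a, b} := by rw [Set.insert_comm, Set.pair_comm]
  refine ⟨fun hp => ⟨interior_convexHull_subset_orient_pos habc hp, ?_, ?_⟩, fun h => ?_⟩
  · rw [hbca] at hp
    exact interior_convexHull_subset_orient_pos (by rwa [orient_rotate]) hp
  · rw [hbca, hcab] at hp
    exact interior_convexHull_subset_orient_pos (by rwa [orient_rotate, orient_rotate]) hp
  · have hopen : IsOpen {q | 0 < orient a b q ∧ 0 < orient b c q ∧ 0 < orient c a q} :=
      (isOpen_lt continuous_const (continuous_orient a b)).inter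
        ((isOpen_lt continuous_const (continuous_orient b c)).inter
          (isOpen_lt continuous_const (continuous_orient c a)))
    exact interior_maximal (fun q hq => mem_convexHull_of_orient_pos hq.1 hq.2.1 hq.2.2)
      hopen h

lemma not_prefix_of_prefix_append_not {s t : List Bool} {b : Bool} (h : s ++ [b] <+: t) :
    ¬ s ++ [!b] <+: t := by
  intro h'
  have heq := List.prefix_of_prefix_length_le h h' (by simp) |>.eq_of_length (by simp)
  cases b <;> simp at heq

lemma length_lt_of_append_prefix {s t : List Bool} {b : Bool} (h : s ++ [b] <+: t) :
    s.length < t.length := by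
  simpa using h.length_le

lemma length_lt_of_prefix_of_ne {s t : List Bool} (h : s <+: t) (hne : s ≠ t) :
    s.length < t.length :=
  lt_of_le_of_ne h.length_le fun hlen => hne (h.eq_of_length hlen)

lemma prefix_of_prefix_of_branch {p a b u : List Bool} {β : Bool} (hpa : p <+: a) (hpb : p <+: b)
    (hua : u ++ [β] <+: a) (hub : u ++ [!β] <+: b) : p <+: u := by
  by_cases hle : p.length ≤ u.length
  · exact List.prefix_of_prefix_length_le hpa ((u.prefix_append _).trans hua) hle
  · have hup : u ++ [β] <+: p := List.prefix_of_prefix_length_le hua hpa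
      (by simp only [List.length_append, List.length_singleton]; omega)
    exact absurd (hup.trans hpb) (by simpa using not_prefix_of_prefix_append_not hub)

lemma exists_append_prefix_of_prefix {s t : List Bool} (h : s <+: t) (hne : s ≠ t) :
    ∃ δ, s ++ [δ] <+: t := by
  obtain ⟨_ | ⟨δ, r⟩, rfl⟩ := h
  · simp at hne
  · exact ⟨δ, r, by simp⟩

lemma ne_of_branch {u r₁ r₂ : List Bool} (hu₁ : u ++ [false] <+: r₁) (hu₂ : u ++ [true] <+: r₂) :
    r₁ ≠ r₂ := by
  rintro rfl; exact not_prefix_of_prefix_append_not hu₁ hu₂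

/-- `a` precedes `b` in the in-order traversal of the binary tree of strings, and `m` is their
longest common prefix. -/
def InorderSplit (m a b : List Bool) : Prop :=
  (a = m ∨ m ++ [false] <+: a) ∧ (b = m ∨ m ++ [true] <+: b) ∧ a ≠ b

namespace InorderSplit

variable {m a b : List Bool}

lemma prefix_left (h : InorderSplit m a b) : m <+: a := by
  rcases h.1 with rfl | h; exacts [List.prefix_refl _, (m.prefix_append _).trans h]

lemma prefix_right (h : InorderSplit m a b) : m <+: b := by
  rcases h.2.1 with rfl | h; exacts [List.prefix_refl _, (m.prefix_append _).trans h]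

lemma prefix_of_prefix {p : List Bool} (h : InorderSplit m a b) (hpa : p <+: a) (hpb : p <+: b) :
    p <+: m := by
  obtain ⟨rfl | ha, rfl | hb, hab⟩ := h
  · exact absurd rfl hab
  · exact hpa
  · exact hpb
  · exact prefix_of_prefix_of_branch hpa hpb ha hb

lemma cons (c : Bool) (h : InorderSplit m a b) : InorderSplit (c :: m) (c :: a) (c :: b) := by
  simpa [InorderSplit, List.cons_prefix_cons] using h

lemma branch_of_length_eq (h : InorderSplit m a b) (hlen : a.length = b.length) :
    m ++ [false] <+: a ∧ m ++ [true] <+: b := by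
  obtain ⟨rfl | ha, rfl | hb, hab⟩ := h
  · exact absurd rfl hab
  · have := length_lt_of_append_prefix hb; omega
  · have := length_lt_of_append_prefix ha; omega
  · exact ⟨ha, hb⟩

end InorderSplit

lemma exists_inorderSplit : ∀ {a b : List Bool}, a ≠ b →
    ∃ m, InorderSplit m a b ∨ InorderSplit m b a
  | [], [], h => absurd rfl h
  | [], c :: b, _ => ⟨[], by cases c <;> simp [InorderSplit, List.cons_prefix_cons]⟩
  | c :: a, [], _ => ⟨[], by cases c <;> simp [InorderSplit, List.cons_prefix_cons]⟩
  | c :: a, d :: b, h => by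
    by_cases hcd : c = d
    · subst hcd
      obtain ⟨m, hm | hm⟩ := exists_inorderSplit (a := a) (b := b) (by simpa using h)
      exacts [⟨c :: m, .inl (hm.cons c)⟩, ⟨c :: m, .inr (hm.cons c)⟩]
    · refine ⟨[], ?_⟩
      cases c <;> cases d <;> simp_all [InorderSplit, List.cons_prefix_cons]

lemma exists_branch_of_length_eq {s t : List Bool} (hst : s ≠ t) (hlen : s.length = t.length) :
    ∃ r₁ r₂ u, ({r₁, r₂} : Set (List Bool)) = {s, t} ∧
      u ++ [false] <+: r₁ ∧ u ++ [true] <+: r₂ ∧ ∀ p, p <+: s → p <+: t → p <+: u := by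
  obtain ⟨m, hm | hm⟩ := exists_inorderSplit hst
  · obtain ⟨h₁, h₂⟩ := hm.branch_of_length_eq hlen
    exact ⟨s, t, m, rfl, h₁, h₂, fun p hs ht => hm.prefix_of_prefix hs ht⟩
  · obtain ⟨h₁, h₂⟩ := hm.branch_of_length_eq hlen.symm
    exact ⟨t, s, m, Set.pair_comm _ _, h₁, h₂, fun p hs ht => hm.prefix_of_prefix ht hs⟩

lemma exists_branching_of_three {t₁ t₂ t₃ : List Bool} {J : ℕ} (h₁ : t₁.length = J)
    (h₂ : t₂.length = J) (h₃ : t₃.length = J) (h₁₂ : t₁ ≠ t₂) (h₁₃ : t₁ ≠ t₃) (h₂₃ : t₂ ≠ t₃) :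
    ∃ r₁ r₂ r₃ z u γ, ({r₁, r₂, r₃} : Set (List Bool)) = {t₁, t₂, t₃} ∧
      u ++ [false] <+: r₁ ∧ u ++ [true] <+: r₂ ∧ z ++ [γ] <+: u ∧ z ++ [!γ] <+: r₃ := by
  obtain ⟨r₁, r₂, d, hpair, hd₁, hd₂, -⟩ := exists_branch_of_length_eq h₁₂ (h₁.trans h₂.symm)
  have hr : ∀ r, r = r₁ ∨ r = r₂ ↔ r = t₁ ∨ r = t₂ := fun r => by
    simpa using Set.ext_iff.mp hpair r
  have hr₁ : r₁ = t₁ ∨ r₁ = t₂ := (hr r₁).mp (.inl rfl)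
  have hr₂ : r₂ = t₁ ∨ r₂ = t₂ := (hr r₂).mp (.inr rfl)
  have hdJ : d.length < J := by
    have := length_lt_of_append_prefix hd₁; rcases hr₁ with rfl | rfl <;> omega
  have hd₃ : d ≠ t₃ := by rintro rfl; omega
  have hset : ({r₁, r₂, t₃} : Set (List Bool)) = {t₁, t₂, t₃} := by
    ext v; simp only [Set.mem_insert_iff, Set.mem_singleton_iff]; rw [← or_assoc, hr v, or_assoc]
  -- `t₃` enters one of the two subtrees of `d`, or leaves the subtree of `d` above `d`
  obtain ⟨m, ⟨rfl | hmd, rfl | hmt, hne⟩ | ⟨rfl | hmt, rfl | hmd, hne⟩⟩ := exists_inorderSplit hd₃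
  · exact absurd rfl hne
  · obtain ⟨r₁', r₂', u, hpair', hu₁, hu₂, hmeet⟩ := exists_branch_of_length_eq
      (s := r₂) (t := t₃) (by rcases hr₂ with rfl | rfl <;> assumption)
      (by rcases hr₂ with rfl | rfl <;> omega)
    refine ⟨r₁', r₂', r₁, d, u, true, ?_, hu₁, hu₂, hmeet _ hd₂ hmt, hd₁⟩
    rw [← hset]; ext v; simp only [Set.mem_insert_iff, Set.mem_singleton_iff]
    rw [← or_assoc, show v = r₁' ∨ v = r₂' ↔ v = r₂ ∨ v = t₃ by simpa using Set.ext_iff.mp hpair' v]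
    tauto
  · exact absurd (length_lt_of_append_prefix hmd) (by omega)
  · exact ⟨r₁, r₂, t₃, m, d, false, hset, hd₁, hd₂, hmd, hmt⟩
  · exact absurd rfl hne
  · exact absurd (length_lt_of_append_prefix hmd) (by omega)
  · obtain ⟨r₁', r₂', u, hpair', hu₁, hu₂, hmeet⟩ := exists_branch_of_length_eq
      (s := r₁) (t := t₃) (by rcases hr₁ with rfl | rfl <;> assumption)
      (by rcases hr₁ with rfl | rfl <;> omega)
    refine ⟨r₁', r₂', r₂, d, u, false, ?_, hu₁, hu₂, hmeet _ hd₁ hmt, hd₂⟩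
    rw [← hset]; ext v; simp only [Set.mem_insert_iff, Set.mem_singleton_iff]
    rw [← or_assoc, show v = r₁' ∨ v = r₂' ↔ v = r₁ ∨ v = t₃ by simpa using Set.ext_iff.mp hpair' v]
    tauto
  · exact ⟨r₁, r₂, t₃, m, d, true, hset, hd₁, hd₂, hmd, hmt⟩

def descLabels (M : ℕ) (x : List Bool → Pt) (s : List Bool) : Set Pt :=
  x '' {t | t.length ≤ M ∧ s <+: t ∧ s ≠ t}

def subtreeLabels (M : ℕ) (x : List Bool → Pt) (s : List Bool) : Set Pt :=
  insert (x s) (descLabels M x s)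

/-- `x` labels the complete binary tree of strings of length `≤ M` (without its root when
`lo = 1`) injectively by points of `X`, and this labelling is an internal and an external
separation. -/
structure IsSeparatedTree (X : Set Pt) (x : List Bool → Pt) (lo M : ℕ) : Prop where
  lo_le_one : lo ≤ 1
  injOn : Set.InjOn x {s | lo ≤ s.length ∧ s.length ≤ M}
  mem : ∀ s : List Bool, lo ≤ s.length → s.length ≤ M → x s ∈ X
  internal : ∀ e : List Bool, e.length < M → ∀ y ∈ X \ descLabels M x e,
    ∀ p ∈ subtreeLabels M x (e ++ [false]), ∀ q ∈ subtreeLabels M x (e ++ [true]),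
      0 < orient p q y
  external : ∀ s : List Bool, lo ≤ s.length → s.length < M → ∀ y ∈ X \ subtreeLabels M x s,
    (∀ p ∈ subtreeLabels M x (s ++ [false]), 0 < orient p (x s) y) ∧
    (∀ q ∈ subtreeLabels M x (s ++ [true]), 0 < orient (x s) q y)

section SeparatedTree

variable {X : Set Pt} {x : List Bool → Pt} {lo M : ℕ}

lemma mem_subtreeLabels_of_prefix {s t : List Bool} (h : s <+: t) (ht : t.length ≤ M) :
    x t ∈ subtreeLabels M x s := by
  by_cases hst : s = t
  · exact hst ▸ Set.mem_insert _ _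
  · exact Set.mem_insert_of_mem _ ⟨t, ⟨ht, h, hst⟩, rfl⟩

lemma subtreeLabels_subset_of_prefix {s t : List Bool} (h : s <+: t) (ht : t.length ≤ M) :
    subtreeLabels M x t ⊆ subtreeLabels M x s := by
  rintro _ (rfl | ⟨v, ⟨hv, htv, -⟩, rfl⟩)
  exacts [mem_subtreeLabels_of_prefix h ht, mem_subtreeLabels_of_prefix (h.trans htv) hv]

lemma notMem_subtreeLabels_of_prefix {s t : List Bool} (h : s <+: t) (ht : t.length ≤ M)
    {y : Pt} (hy : y ∉ subtreeLabels M x s) : y ∉ subtreeLabels M x t :=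
  fun h' => hy (subtreeLabels_subset_of_prefix h ht h')

namespace IsSeparatedTree

lemma mem_descLabels_iff (T : IsSeparatedTree X x lo M) {s t : List Bool} (ht : lo ≤ t.length)
    (ht' : t.length ≤ M) : x t ∈ descLabels M x s ↔ s <+: t ∧ s ≠ t := by
  refine ⟨?_, fun h => ⟨t, ⟨ht', h⟩, rfl⟩⟩
  rintro ⟨v, ⟨hv, hsv, hne⟩, hvt⟩
  have hlen := length_lt_of_prefix_of_ne hsv hne
  obtain rfl : v = t := T.injOn ⟨by have := T.lo_le_one; omega, hv⟩ ⟨ht, ht'⟩ hvt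
  exact ⟨hsv, hne⟩

lemma mem_subtreeLabels_iff (T : IsSeparatedTree X x lo M) {s t : List Bool}
    (hs : s.length ≤ M) (ht : lo ≤ t.length) (ht' : t.length ≤ M) :
    x t ∈ subtreeLabels M x s ↔ s <+: t := by
  refine ⟨?_, fun h => mem_subtreeLabels_of_prefix h ht'⟩
  rintro (h | h)
  · rcases s with _ | ⟨b, s⟩
    · exact List.nil_prefix
    · have := T.lo_le_one
      rw [T.injOn ⟨ht, ht'⟩ ⟨by simp only [List.length_cons]; omega, hs⟩ h]
  · exact ((T.mem_descLabels_iff ht ht').mp h).1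

lemma notMem_subtreeLabels_of_branch (T : IsSeparatedTree X x lo M) {s t : List Bool}
    {β : Bool} (hs : s.length < M) (ht : lo ≤ t.length) (ht' : t.length ≤ M)
    (hst : s ++ [!β] <+: t) : x t ∉ subtreeLabels M x (s ++ [β]) := fun h =>
  not_prefix_of_prefix_append_not ((T.mem_subtreeLabels_iff
    (by simp only [List.length_append, List.length_singleton]; omega) ht ht').mp h) hst

lemma orient_pos (T : IsSeparatedTree X x lo M) {m a b : List Bool} (hab : InorderSplit m a b)
    (ha : lo ≤ a.length) (ha' : a.length ≤ M) (hb : lo ≤ b.length) (hb' : b.length ≤ M)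
    {y : Pt} (hy : y ∈ X) (hym : y ∉ subtreeLabels M x m) : 0 < orient (x a) (x b) y := by
  obtain ⟨rfl | hma, rfl | hmb, hne⟩ := hab
  · exact absurd rfl hne
  · have := length_lt_of_append_prefix hmb
    exact (T.external a ha (by omega) y ⟨hy, hym⟩).2 _ (mem_subtreeLabels_of_prefix hmb hb')
  · have := length_lt_of_append_prefix hma
    exact (T.external b hb (by omega) y ⟨hy, hym⟩).1 _ (mem_subtreeLabels_of_prefix hma ha')
  · have := length_lt_of_append_prefix hma
    exact T.internal m (by omega) y ⟨hy, fun h => hym (Set.mem_insert_of_mem _ h)⟩ _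
      (mem_subtreeLabels_of_prefix hma ha') _ (mem_subtreeLabels_of_prefix hmb hb')

variable {r₁ r₂ u base : List Bool} {J : ℕ} {c : Pt}

lemma mem_interior_of_branch (T : IsSeparatedTree X x lo M) (hJ : J ≤ M)
    (h₁ : r₁.length = J) (h₂ : r₂.length = J) (hu₁ : u ++ [false] <+: r₁)
    (hu₂ : u ++ [true] <+: r₂) (hu : lo ≤ u.length) (hbu : base <+: u) (hc : c ∈ X)
    (hcb : c ∉ subtreeLabels M x base) :
    0 < orient (x r₁) (x r₂) c ∧ x u ∈ interior (convexHull ℝ {x r₁, x r₂, c}) := by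
  have hlen₁ := length_lt_of_append_prefix hu₁
  have hlen₂ := length_lt_of_append_prefix hu₂
  have hcu := notMem_subtreeLabels_of_prefix hbu (by omega) hcb
  have hO := T.orient_pos ⟨.inr hu₁, .inr hu₂, ne_of_branch hu₁ hu₂⟩
    (by omega) (by omega) (by omega) (by omega) hc hcu
  refine ⟨hO, (mem_interior_triangle_iff hO).mpr ⟨?_, ?_, ?_⟩⟩
  · have hxu : x u ∉ descLabels M x u := fun h =>
      ((T.mem_descLabels_iff hu (by omega)).mp h).2 rfl
    exact T.internal u (by omega) _ ⟨T.mem u hu (by omega), hxu⟩ _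
      (mem_subtreeLabels_of_prefix hu₁ (by omega)) _ (mem_subtreeLabels_of_prefix hu₂ (by omega))
  · rw [orient_rotate]
    exact T.orient_pos ⟨.inl rfl, .inr hu₂, fun h => by rw [h] at hlen₂; omega⟩
      hu (by omega) (by omega) (by omega) hc hcu
  · rw [← orient_rotate]
    exact T.orient_pos ⟨.inr hu₁, .inl rfl, fun h => by rw [h] at hlen₁; omega⟩
      (by omega) (by omega) hu (by omega) hc hcu

lemma not_inside_of_lone_vertex (T : IsSeparatedTree X x lo M) {t w base : List Bool} {q r : Pt}
    (ht : t.length ≤ M) (hbt : base <+: t) (hq : q ∈ X) (hqb : q ∉ subtreeLabels M x base)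
    (hr : r ∈ X) (hrb : r ∉ subtreeLabels M x base) (hbw : base <+: w) (hw : lo ≤ w.length)
    (hwt : w.length < t.length) :
    ¬ (0 < orient (x t) q (x w) ∧ 0 < orient r (x t) (x w)) := by
  rintro ⟨htq, hrt⟩
  have hlo := T.lo_le_one
  obtain ⟨m, hm | hm⟩ := exists_inorderSplit (a := w) (b := t) (by rintro rfl; omega)
  · have := T.orient_pos hm hw (by omega) (by omega) ht hr (notMem_subtreeLabels_of_prefix
      (hm.prefix_of_prefix hbw hbt) (hm.prefix_right.length_le.trans ht) hrb)
    linarith [orient_rotate r (x t) (x w), orient_swap (x w) (x t) r]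
  · have := T.orient_pos hm (by omega) ht hw (by omega) hq (notMem_subtreeLabels_of_prefix
      (hm.prefix_of_prefix hbt hbw) (hm.prefix_left.length_le.trans ht) hqb)
    linarith [orient_swap_right (x t) (x w) q]

lemma eq_of_mem_interior_of_branch (T : IsSeparatedTree X x lo M) (hJ : J ≤ M)
    (h₁ : r₁.length = J) (h₂ : r₂.length = J) (hu₁ : u ++ [false] <+: r₁)
    (hu₂ : u ++ [true] <+: r₂) (hu : lo ≤ u.length) (hbu : base <+: u) (hc : c ∈ X)
    (hcb : c ∉ subtreeLabels M x base) {w : List Bool} (hbw : base <+: w) (hw : lo ≤ w.length)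
    (hwJ : w.length < J) (hwin : x w ∈ interior (convexHull ℝ {x r₁, x r₂, c})) : w = u := by
  have hlen₁ := length_lt_of_append_prefix hu₁
  have hlen₂ := length_lt_of_append_prefix hu₂
  have hur₁ : u <+: r₁ := (u.prefix_append _).trans hu₁
  have hur₂ : u <+: r₂ := (u.prefix_append _).trans hu₂
  obtain ⟨h₁₂, h₂c, hc₁⟩ :=
    (mem_interior_triangle_iff (T.mem_interior_of_branch hJ h₁ h₂ hu₁ hu₂ hu hbu hc hcb).1).mp hwin
  have hcu : ∀ β : Bool, c ∉ subtreeLabels M x (u ++ [β]) := fun β =>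
    notMem_subtreeLabels_of_prefix (hbu.trans (u.prefix_append _))
      (by simp only [List.length_append, List.length_singleton]; omega) hcb
  -- below `u`, the triangle has a single vertex in each of the two subtrees of `u`
  have hbelow : ∀ β : Bool, u ++ [β] <+: w → False
    | false, huw => T.not_inside_of_lone_vertex (by omega) hu₁ (T.mem r₂ (by omega) (by omega))
        (T.notMem_subtreeLabels_of_branch (by omega) (by omega) (by omega) hu₂) hc (hcu false)
        huw hw (by omega) ⟨h₁₂, hc₁⟩
    | true, huw => T.not_inside_of_lone_vertex (by omega) hu₂ hc (hcu true)
        (T.mem r₁ (by omega) (by omega))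
        (T.notMem_subtreeLabels_of_branch (β := true) (by omega) (by omega) (by omega) hu₁)
        huw hw (by omega) ⟨h₂c, h₁₂⟩
  by_contra hwu
  obtain ⟨m, hm | hm⟩ := exists_inorderSplit hwu
  · have hbm := hm.prefix_of_prefix hbw hbu
    obtain ⟨hmw, rfl | hmu, -⟩ := hm
    · exact hbelow false (hmw.resolve_left hwu)
    · have hmu' := length_lt_of_append_prefix hmu
      have := T.orient_pos ⟨hmw, .inr (hmu.trans hur₁), by rintro rfl; omega⟩ hw (by omega)
        (by omega) (by omega) hc (notMem_subtreeLabels_of_prefix hbm (by omega) hcb)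
      linarith [orient_rotate c (x r₁) (x w), orient_swap (x w) (x r₁) c]
  · have hbm := hm.prefix_of_prefix hbu hbw
    obtain ⟨rfl | hmu, hmw, -⟩ := hm
    · exact hbelow true (hmw.resolve_left hwu)
    · have hmu' := length_lt_of_append_prefix hmu
      have := T.orient_pos ⟨.inr (hmu.trans hur₂), hmw, by rintro rfl; omega⟩ (by omega)
        (by omega) hw (by omega) hc (notMem_subtreeLabels_of_prefix hbm (by omega) hcb)
      linarith [orient_swap_right (x r₂) (x w) c]

lemma interior_of_branching (T : IsSeparatedTree X x lo M) {r₃ z : List Bool} {γ : Bool}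
    (hJ : J ≤ M) (h₁ : r₁.length = J) (h₂ : r₂.length = J) (h₃ : r₃.length = J)
    (hu₁ : u ++ [false] <+: r₁) (hu₂ : u ++ [true] <+: r₂) (hz : z ++ [γ] <+: u)
    (hz₃ : z ++ [!γ] <+: r₃) :
    x u ∈ interior (convexHull ℝ {x r₁, x r₂, x r₃}) ∧
    (∀ y ∈ X, y ∈ interior (convexHull ℝ {x r₁, x r₂, x r₃}) → y ∈ descLabels M x z) ∧
    (∀ w : List Bool, lo ≤ w.length → w.length < J →
      x w ∈ interior (convexHull ℝ {x r₁, x r₂, x r₃}) → w = u) := by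
  have hlen₁ := length_lt_of_append_prefix hu₁
  have hlen := length_lt_of_append_prefix hz
  have hlo := T.lo_le_one
  have hur₁ : u <+: r₁ := (u.prefix_append _).trans hu₁
  have hur₂ : u <+: r₂ := (u.prefix_append _).trans hu₂
  have hX : ∀ {r : List Bool}, r.length = J → x r ∈ X := fun hr => T.mem _ (by omega) (by omega)
  have hnot : ∀ {r : List Bool} {β : Bool}, r.length = J → z ++ [!β] <+: r →
      x r ∉ subtreeLabels M x (z ++ [β]) :=
    fun hr => T.notMem_subtreeLabels_of_branch (by omega) (by omega) (by omega)
  have h₃b := hnot h₃ hz₃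
  obtain ⟨hO, hin⟩ := T.mem_interior_of_branch hJ h₁ h₂ hu₁ hu₂ (by omega) hz (hX h₃) h₃b
  have hdesc : ∀ y ∈ X, y ∈ interior (convexHull ℝ {x r₁, x r₂, x r₃}) →
      y ∈ descLabels M x z := by
    intro y hy hyin
    by_contra hyz
    obtain ⟨-, h₂₃, h₃₁⟩ := (mem_interior_triangle_iff hO).mp hyin
    cases γ
    · have := T.internal z (by omega) y ⟨hy, hyz⟩ _
        (mem_subtreeLabels_of_prefix (hz.trans hur₁) (by omega)) _
        (mem_subtreeLabels_of_prefix hz₃ (by omega))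
      linarith [orient_swap (x r₁) (x r₃) y]
    · have := T.internal z (by omega) y ⟨hy, hyz⟩ _
        (mem_subtreeLabels_of_prefix hz₃ (by omega)) _
        (mem_subtreeLabels_of_prefix (hz.trans hur₂) (by omega))
      linarith [orient_swap (x r₃) (x r₂) y]
  refine ⟨hin, hdesc, fun w hw hwJ hwin => ?_⟩
  obtain ⟨hzw, hne⟩ :=
    (T.mem_descLabels_iff hw (by omega)).mp (hdesc _ (T.mem w hw (by omega)) hwin)
  obtain ⟨δ, hδ⟩ := exists_append_prefix_of_prefix hzw hne
  obtain rfl | rfl : δ = γ ∨ δ = !γ := by cases δ <;> cases γ <;> simp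
  · exact T.eq_of_mem_interior_of_branch hJ h₁ h₂ hu₁ hu₂ (by omega) hz (hX h₃) h₃b hδ hw hwJ hwin
  · obtain ⟨-, h₂₃, h₃₁⟩ := (mem_interior_triangle_iff hO).mp hwin
    exact absurd ⟨h₃₁, h₂₃⟩ (T.not_inside_of_lone_vertex (by omega) hz₃ (hX h₁)
      (hnot h₁ (by simpa using hz.trans hur₁)) (hX h₂) (hnot h₂ (by simpa using hz.trans hur₂))
      hδ hw (by omega))

end IsSeparatedTree

end SeparatedTree

lemma hasLayers_unique {X : Set Pt} {k k' : ℕ} (h : HasLayers X k) (h' : HasLayers X k') :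
    k = k' := by
  rcases lt_trichotomy k k' with hlt | rfl | hlt
  exacts [absurd h.1 (h'.2 k hlt), rfl, absurd h'.1 (h.2 k' hlt)]

lemma layerSub_eq_image {ν : Type*} {X : Set Pt} {k : ℕ} {x : ν → Pt} {N : Set ν}
    {lvl : ν → ℕ} (hinj : Set.InjOn x N) (hX : x '' N = X) (hN : ∀ u ∈ N, lvl u ≤ k)
    (hlayer : ∀ j, 1 ≤ j → j ≤ k → layer X k j = x '' {u | u ∈ N ∧ lvl u = j})
    {j : ℕ} (hj : j ≤ k) : layerSub X k j = x '' {u | u ∈ N ∧ lvl u ≤ j} := by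
  induction hd : k - j generalizing j with
  | zero =>
    obtain rfl : j = k := by omega
    rw [layerSub, hd, Function.iterate_zero_apply, ← hX]
    congr 1
    ext u
    exact ⟨fun hu => ⟨hu, hN u hu⟩, And.left⟩
  | succ d ih =>
    have hpeel : layerSub X k j = peel (layerSub X k (j + 1)) := by
      rw [layerSub, layerSub, show k - j = k - (j + 1) + 1 by omega,
        Function.iterate_succ_apply']
    have hinj' : Set.InjOn x {u | u ∈ N ∧ lvl u ≤ j + 1} := hinj.mono fun u hu => hu.1
    rw [hpeel, peel, ← layer, hlayer (j + 1) (by omega) (by omega), ih (by omega) (by omega),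
      ← hinj'.image_sdiff_subset fun u hu => ⟨hu.1, hu.2.le⟩]
    congr 1
    ext u
    simp only [Set.mem_sdiff, Set.mem_ofPred_eq]
    constructor
    · rintro ⟨⟨hu, h₁⟩, h₂⟩; exact ⟨hu, Nat.le_of_lt_succ (lt_of_le_of_ne h₁ (h₂ ⟨hu, ·⟩))⟩
    · rintro ⟨hu, h₁⟩; exact ⟨⟨hu, by omega⟩, fun h => by omega⟩

lemma existsUnique_mem_image_inter {ν : Type*} {x : ν → Pt} {N : Set ν} {I : Set Pt} {n₀ : ν}
    (hn₀ : n₀ ∈ N) (hI₀ : x n₀ ∈ I) (huniq : ∀ n ∈ N, x n ∈ I → x n = x n₀) :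
    ∃! p, p ∈ x '' N ∩ I :=
  ⟨x n₀, ⟨⟨n₀, hn₀, rfl⟩, hI₀⟩, by rintro _ ⟨⟨n, hn, rfl⟩, hnI⟩; exact huniq n hn hnI⟩

lemma isNACS_of_level_labeling {ν : Type*} {X : Set Pt} {k : ℕ} {x : ν → Pt} {N : Set ν}
    {lvl : ν → ℕ} (hfin : X.Finite) (hne : X.Nonempty) (hgp : GenPos X) (hk : HasLayers X k)
    (hinj : Set.InjOn x N) (hX : x '' N = X) (hN : ∀ u ∈ N, lvl u ≤ k)
    (hlayer : ∀ j, 1 ≤ j → j ≤ k → layer X k j = x '' {u | u ∈ N ∧ lvl u = j})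
    (htri : ∀ j, 1 ≤ j → j ≤ k → ∀ u₁ ∈ N, ∀ u₂ ∈ N, ∀ u₃ ∈ N,
      lvl u₁ = j → lvl u₂ = j → lvl u₃ = j → x u₁ ≠ x u₂ → x u₁ ≠ x u₃ → x u₂ ≠ x u₃ →
      ∃! p, p ∈ x '' {u | u ∈ N ∧ lvl u ≤ j - 1} ∩ interior (convexHull ℝ {x u₁, x u₂, x u₃})) :
    IsNACS X := by
  refine ⟨hfin, hne, hgp, fun k' hk' j hj hjk a ha b hb c hc hab hac hbc => ?_⟩
  obtain rfl := hasLayers_unique hk hk'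
  rw [hlayer j hj hjk] at ha hb hc
  obtain ⟨u₁, ⟨hu₁, h₁⟩, rfl⟩ := ha
  obtain ⟨u₂, ⟨hu₂, h₂⟩, rfl⟩ := hb
  obtain ⟨u₃, ⟨hu₃, h₃⟩, rfl⟩ := hc
  rw [layerSub_eq_image hinj hX hN hlayer (by omega)]
  exact htri j hj hjk u₁ hu₁ u₂ hu₂ u₃ hu₃ h₁ h₂ h₃ hab hac hbc

@[simp] lemma length_strOfNat (j i : ℕ) : (strOfNat j i).length = j := by
  simp [strOfNat]

lemma natOfStr_append (s : List Bool) (b : Bool) :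
    natOfStr (s ++ [b]) = 2 * natOfStr s + b.toNat := by
  simp [natOfStr, List.foldl_append]

lemma natOfStr_lt (s : List Bool) : natOfStr s < 2 ^ s.length := by
  induction s using List.reverseRecOn with
  | nil => simp [natOfStr]
  | append_singleton s b ih =>
    rw [natOfStr_append, List.length_append, List.length_singleton, pow_succ]
    have := Bool.toNat_le b
    omega

lemma strOfNat_succ (j i : ℕ) : strOfNat (j + 1) i = strOfNat j (i / 2) ++ [i.testBit 0] := by
  rw [strOfNat, List.range_succ, List.map_append]
  congr 1
  · refine List.map_congr_left fun t ht => ?_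
    rw [List.mem_range] at ht
    rw [show j + 1 - 1 - t = j - 1 - t + 1 by omega, Nat.testBit_succ]
  · simp

lemma strOfNat_natOfStr (s : List Bool) : strOfNat s.length (natOfStr s) = s := by
  induction s using List.reverseRecOn with
  | nil => simp [strOfNat]
  | append_singleton s b ih =>
    rw [natOfStr_append, List.length_append, List.length_singleton, strOfNat_succ]
    have h₁ : (2 * natOfStr s + b.toNat) / 2 = natOfStr s := by
      have := Bool.toNat_le b; omega
    have h₂ : (2 * natOfStr s + b.toNat).testBit 0 = b := by
      cases b <;> simp [Nat.testBit_zero]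
    rw [h₁, h₂, ih]

lemma range_strOfNat (j : ℕ) :
    Set.range (fun i : Fin (2 ^ j) => strOfNat j i) = {s | s.length = j} := by
  ext s
  refine ⟨by rintro ⟨i, rfl⟩; simp, fun hs => ?_⟩
  rw [Set.mem_ofPred_eq] at hs
  exact ⟨⟨natOfStr s, hs ▸ natOfStr_lt s⟩, hs ▸ strOfNat_natOfStr s⟩

section Labeling1

variable {X : Set Pt} {k : ℕ} {x : List Bool → Pt}

lemma descSet1_eq_descLabels (s : List Bool) : descSet1 k x s = descLabels k x s := by
  simp only [descSet1, descLabels, ValidNode1]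
  congr 1
  ext t
  refine ⟨fun ⟨⟨_, ht⟩, h⟩ => ⟨ht, h⟩, fun ⟨ht, hst, hne⟩ => ⟨⟨?_, ht⟩, hst, hne⟩⟩
  have := length_lt_of_prefix_of_ne hst hne
  omega

lemma barSet1_eq_subtreeLabels (s : List Bool) : barSet1 k x s = subtreeLabels k x s := by
  rw [barSet1, subtreeLabels, descSet1_eq_descLabels]

lemma isSeparatedTree_of_labeling1 (hL : IsLabeling1 k X x) (hI : InternalSep1 k X x)
    (hE : ExternalSep1 k X x) : IsSeparatedTree X x 1 k where
  lo_le_one := le_rfl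
  injOn := hL.1
  mem s h₁ h₂ := hL.2 ▸ ⟨s, ⟨h₁, h₂⟩, rfl⟩
  internal e he := by
    simpa only [descSet1_eq_descLabels, barSet1_eq_subtreeLabels] using hI e he
  external s h₁ h₂ := by
    simpa only [barSet1_eq_subtreeLabels] using hE s h₁ h₂

lemma layer_eq_image_of_nested1 (hN : Nested1 k X x) {j : ℕ} (hj : 1 ≤ j) (hjk : j ≤ k) :
    layer X k j = x '' {s | ValidNode1 k s ∧ s.length = j} := by
  have hvalid : {s | ValidNode1 k s ∧ s.length = j} = {s | s.length = j} := by
    ext s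
    simp only [Set.mem_ofPred_eq, ValidNode1]
    exact ⟨And.right, fun h => ⟨⟨by omega, by omega⟩, h⟩⟩
  rw [hvalid, ← (hN j hj hjk).2.1, ← range_strOfNat, ← Set.range_comp]
  rfl

lemma existsUnique_inside_of_labeling1 (hL : IsLabeling1 k X x) (hI : InternalSep1 k X x)
    (hE : ExternalSep1 k X x) {j : ℕ} (hjk : j ≤ k) {t₁ t₂ t₃ : List Bool} (h₁ : t₁.length = j)
    (h₂ : t₂.length = j) (h₃ : t₃.length = j) (h₁₂ : x t₁ ≠ x t₂) (h₁₃ : x t₁ ≠ x t₃)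
    (h₂₃ : x t₂ ≠ x t₃) :
    ∃! p, p ∈ x '' {s | ValidNode1 k s ∧ s.length ≤ j - 1} ∩
      interior (convexHull ℝ {x t₁, x t₂, x t₃}) := by
  obtain ⟨r₁, r₂, r₃, z, u, γ, hset, hu₁, hu₂, hz, hz₃⟩ := exists_branching_of_three h₁ h₂ h₃
    (ne_of_apply_ne x h₁₂) (ne_of_apply_ne x h₁₃) (ne_of_apply_ne x h₂₃)
  have hr : ∀ r ∈ ({r₁, r₂, r₃} : Set (List Bool)), r.length = j := by
    rw [hset]; rintro r (rfl | rfl | rfl) <;> assumption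
  have htri : ({x t₁, x t₂, x t₃} : Set Pt) = {x r₁, x r₂, x r₃} := by
    simpa [Set.image_insert_eq] using congrArg (x '' ·) hset.symm
  have hu := length_lt_of_append_prefix hu₁
  have hz' := length_lt_of_append_prefix hz
  rw [hr r₁ (by simp)] at hu
  obtain ⟨hin, -, huniq⟩ := (isSeparatedTree_of_labeling1 hL hI hE).interior_of_branching hjk
    (hr r₁ (by simp)) (hr r₂ (by simp)) (hr r₃ (by simp)) hu₁ hu₂ hz hz₃
  rw [htri]
  refine existsUnique_mem_image_inter (n₀ := u) ⟨⟨by omega, by omega⟩, by omega⟩ hin ?_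
  rintro w ⟨⟨hw, -⟩, hwj⟩ hwin
  rw [huniq w hw (by omega) hwin]

lemma isNACS_of_labeling1 (hfin : X.Finite) (hne : X.Nonempty) (hgp : GenPos X)
    (hk : HasLayers X k) (hL : IsLabeling1 k X x) (hN : Nested1 k X x)
    (hI : InternalSep1 k X x) (hE : ExternalSep1 k X x) : IsNACS X :=
  isNACS_of_level_labeling hfin hne hgp hk hL.1 hL.2 (fun _ hs => hs.2)
    (fun _ hj hjk => layer_eq_image_of_nested1 hN hj hjk)
    fun _ _ hjk _ _ _ _ _ _ h₁ h₂ h₃ => existsUnique_inside_of_labeling1 hL hI hE hjk h₁ h₂ h₃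

end Labeling1

section Labeling2

variable {X : Set Pt} {k : ℕ} {x : Node2 → Pt}

def level2 : Node2 → ℕ
  | none => 1
  | some (_, s) => s.length + 2

def branchLabel (x : Node2 → Pt) (γ : Fin 3) (s : List Bool) : Pt := x (some (γ, s))

lemma range_node2At (j : ℕ) :
    Set.range (fun i : Fin (3 * 2 ^ j) => node2At j i) = {u | level2 u = j + 2} := by
  ext u
  refine ⟨by rintro ⟨i, rfl⟩; simp [node2At, level2], fun hu => ?_⟩
  obtain _ | ⟨c, s⟩ := u
  · simp [level2] at hu
  · obtain rfl : s.length = j := by simpa [level2] using hu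
    have hlt := natOfStr_lt s
    have hpos : 0 < 2 ^ s.length := by positivity
    refine ⟨⟨2 ^ s.length * c + natOfStr s, by have := c.isLt; nlinarith⟩, ?_⟩
    have hdiv : (2 ^ s.length * c + natOfStr s) / 2 ^ s.length = c := by
      rw [Nat.add_comm, Nat.add_mul_div_left _ _ hpos, Nat.div_eq_of_lt hlt, Nat.zero_add]
    have hmod : (2 ^ s.length * c + natOfStr s) % 2 ^ s.length = natOfStr s := by
      rw [Nat.mul_add_mod, Nat.mod_eq_of_lt hlt]
    simp only [node2At, hdiv, hmod, Nat.mod_eq_of_lt c.isLt, Fin.eta, strOfNat_natOfStr]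

lemma layer_eq_image_of_nested2 (hN : Nested2 k X x) {j : ℕ} (hj : 1 ≤ j) (hjk : j ≤ k) :
    layer X k j = x '' {u | ValidNode2 k u ∧ level2 u = j} := by
  have hvalid : {u | ValidNode2 k u ∧ level2 u = j} = {u | level2 u = j} := by
    ext (_ | ⟨c, s⟩) <;> simp only [Set.mem_ofPred_eq, ValidNode2, level2, true_and]
    exact ⟨And.right, fun h => ⟨by omega, h⟩⟩
  rw [hvalid]
  obtain rfl | hj2 := eq_or_lt_of_le hj
  · rw [← hN.1.2.1]
    ext p
    simp only [Set.mem_range, Set.mem_image, Set.mem_ofPred_eq]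
    constructor
    · rintro ⟨-, rfl⟩; exact ⟨none, rfl, rfl⟩
    · rintro ⟨_ | ⟨c, s⟩, hu, rfl⟩
      · exact ⟨0, rfl⟩
      · simp [level2] at hu
  · obtain ⟨i, rfl⟩ : ∃ i, j = i + 2 := ⟨j - 2, by omega⟩
    rw [← (hN.2 i hjk).2.1, ← range_node2At, ← Set.range_comp]
    rfl

lemma descSet2_eq_descLabels (hk : 2 ≤ k) (γ : Fin 3) (s : List Bool) :
    descSet2 k x γ s = descLabels (k - 2) (branchLabel x γ) s := by
  ext p
  constructor
  · rintro ⟨_, ⟨t, rfl, ht, hst⟩, rfl⟩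
    exact ⟨t, ⟨by omega, hst⟩, rfl⟩
  · rintro ⟨t, ⟨ht, hst⟩, rfl⟩
    exact ⟨some (γ, t), ⟨t, rfl, by omega, hst⟩, rfl⟩

lemma barSet2_eq_subtreeLabels (hk : 2 ≤ k) (γ : Fin 3) (s : List Bool) :
    barSet2 k x γ s = subtreeLabels (k - 2) (branchLabel x γ) s := by
  rw [barSet2, subtreeLabels, descSet2_eq_descLabels hk]
  rfl

lemma isSeparatedTree_of_labeling2 (hk : 2 ≤ k) (hL : IsLabeling2 k X x)
    (hI : InternalSep2 k X x) (hE : ExternalSep2 k X x) (γ : Fin 3) :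
    IsSeparatedTree X (branchLabel x γ) 0 (k - 2) where
  lo_le_one := zero_le_one
  injOn s hs t ht h := by
    simpa using hL.1 (show s.length + 2 ≤ k by have := hs.2; omega)
      (show t.length + 2 ≤ k by have := ht.2; omega) h
  mem s _ hs := hL.2 ▸ ⟨some (γ, s), show s.length + 2 ≤ k by omega, rfl⟩
  internal e he := by
    simpa only [descSet2_eq_descLabels hk, barSet2_eq_subtreeLabels hk] using
      hI.1 γ e (by omega)
  external s _ hs := by
    simpa only [barSet2_eq_subtreeLabels hk, branchLabel] using hE γ s (by omega)

lemma mem_of_isLabeling2 (hL : IsLabeling2 k X x) {n : Node2} (hn : ValidNode2 k n) : x n ∈ X :=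
  hL.2 ▸ ⟨n, hn, rfl⟩

lemma mem_subtreeLabels_nil_iff (hL : IsLabeling2 k X x) (hk : 2 ≤ k) {n : Node2}
    (hn : ValidNode2 k n) {γ : Fin 3} :
    x n ∈ subtreeLabels (k - 2) (branchLabel x γ) [] ↔ ∃ t, n = some (γ, t) := by
  refine ⟨?_, ?_⟩
  · rintro (h | ⟨t, ⟨ht, -⟩, h⟩)
    · exact ⟨[], hL.1 hn (show 0 + 2 ≤ k by omega) h⟩
    · exact ⟨t, (hL.1 (show t.length + 2 ≤ k by omega) hn h).symm⟩
  · rintro ⟨t, rfl⟩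
    exact mem_subtreeLabels_of_prefix List.nil_prefix (by have : t.length + 2 ≤ k := hn; omega)

lemma notMem_subtreeLabels_nil_of_ne (hL : IsLabeling2 k X x) {δ δ' : Fin 3} {s : List Bool}
    (hs : s.length + 2 ≤ k) (hδ : δ ≠ δ') :
    x (some (δ, s)) ∉ subtreeLabels (k - 2) (branchLabel x δ') [] := by
  simpa [mem_subtreeLabels_nil_iff hL (by omega) (n := some (δ, s)) hs] using hδ

lemma InternalSep2.orient_pos (hk : 2 ≤ k) (hI : InternalSep2 k X x) {i : Fin 3} {a b y : Pt}
    (ha : a ∈ subtreeLabels (k - 2) (branchLabel x i) [])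
    (hb : b ∈ subtreeLabels (k - 2) (branchLabel x (i + 1)) []) (hy : y ∈ X)
    (hyi : y ∉ subtreeLabels (k - 2) (branchLabel x i) [])
    (hyi' : y ∉ subtreeLabels (k - 2) (branchLabel x (i + 1)) []) : 0 < orient a b y := by
  simp only [← barSet2_eq_subtreeLabels hk] at ha hb hyi hyi'
  exact hI.2 i y ⟨hy, by rintro (h | h) <;> contradiction⟩ a ha b hb

lemma fin_three_eq_or (γ δ : Fin 3) : δ = γ ∨ δ = γ + 1 ∨ δ = γ + 2 := by
  revert γ δ; decide

lemma fin_three_eq_add_one_or {γ γ' : Fin 3} (h : γ' ≠ γ) : γ' = γ + 1 ∨ γ = γ' + 1 := by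
  revert γ γ'; decide

lemma fin_three_cases {c₁ c₂ c₃ : Fin 3} (h₁₂ : c₁ ≠ c₂) (h₁₃ : c₁ ≠ c₃) (h₂₃ : c₂ ≠ c₃) :
    c₂ = c₁ + 1 ∧ c₃ = c₁ + 2 ∨ c₂ = c₁ + 2 ∧ c₃ = c₁ + 1 := by
  revert c₁ c₂ c₃; decide

lemma fin_three_add_facts (γ : Fin 3) :
    γ + 1 ≠ γ ∧ γ + 2 ≠ γ ∧ γ + 2 ≠ γ + 1 ∧ γ + 1 + 1 = γ + 2 ∧ γ + 2 + 1 = γ := by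
  revert γ; decide

variable {J : ℕ}

lemma existsUnique_inside_of_one_branch (hk : J + 2 ≤ k) (hL : IsLabeling2 k X x)
    (hI : InternalSep2 k X x) (hE : ExternalSep2 k X x) {γ : Fin 3} {s₁ s₂ s₃ : List Bool}
    (h₁ : s₁.length = J) (h₂ : s₂.length = J) (h₃ : s₃.length = J)
    (h₁₂ : s₁ ≠ s₂) (h₁₃ : s₁ ≠ s₃) (h₂₃ : s₂ ≠ s₃) :
    ∃! p, p ∈ x '' {u | ValidNode2 k u ∧ level2 u ≤ J + 1} ∩
      interior (convexHull ℝ {x (some (γ, s₁)), x (some (γ, s₂)), x (some (γ, s₃))}) := by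
  obtain ⟨r₁, r₂, r₃, z, u, β, hset, hu₁, hu₂, hz, hz₃⟩ :=
    exists_branching_of_three h₁ h₂ h₃ h₁₂ h₁₃ h₂₃
  have hr : ∀ r ∈ ({r₁, r₂, r₃} : Set (List Bool)), r.length = J := by
    rw [hset]; rintro r (rfl | rfl | rfl) <;> assumption
  have htri : ({branchLabel x γ s₁, branchLabel x γ s₂, branchLabel x γ s₃} : Set Pt) =
      {branchLabel x γ r₁, branchLabel x γ r₂, branchLabel x γ r₃} := by
    simpa [Set.image_insert_eq] using congrArg (branchLabel x γ '' ·) hset.symm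
  obtain ⟨hin, hdesc, huniq⟩ := (isSeparatedTree_of_labeling2 (by omega) hL hI hE γ)
    |>.interior_of_branching (J := J) (by omega) (hr r₁ (by simp)) (hr r₂ (by simp))
      (hr r₃ (by simp)) hu₁ hu₂ hz hz₃
  have hu := length_lt_of_append_prefix hu₁
  have hzu := length_lt_of_append_prefix hz
  rw [hr r₁ (by simp)] at hu
  change ∃! p, p ∈ _ ∩ interior (convexHull ℝ
    {branchLabel x γ s₁, branchLabel x γ s₂, branchLabel x γ s₃})
  rw [htri]
  refine existsUnique_mem_image_inter (n₀ := some (γ, u))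
    ⟨show u.length + 2 ≤ k by omega, show u.length + 2 ≤ J + 1 by omega⟩ hin ?_
  rintro n ⟨hn, hlvl⟩ hnin
  obtain ⟨t, rfl⟩ := (mem_subtreeLabels_nil_iff hL (by omega) hn).mp
    (subtreeLabels_subset_of_prefix List.nil_prefix (by omega)
      (Set.mem_insert_of_mem _ (hdesc _ (mem_of_isLabeling2 hL hn) hnin)))
  exact congrArg (branchLabel x γ)
    (huniq t (Nat.zero_le _) (by simp only [level2] at hlvl; omega) hnin)

lemma existsUnique_inside_of_two_branches_of_branch (hk : J + 2 ≤ k) (hL : IsLabeling2 k X x)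
    (hI : InternalSep2 k X x) (hE : ExternalSep2 k X x) {γ γ' : Fin 3} (hγ : γ' ≠ γ)
    {s₁ s₂ s₃ d : List Bool} (h₁ : s₁.length = J) (h₂ : s₂.length = J) (h₃ : s₃.length = J)
    (hd₁ : d ++ [false] <+: s₁) (hd₂ : d ++ [true] <+: s₂) :
    ∃! p, p ∈ x '' {u | ValidNode2 k u ∧ level2 u ≤ J + 1} ∩
      interior (convexHull ℝ {x (some (γ, s₁)), x (some (γ, s₂)), x (some (γ', s₃))}) := by
  have hk2 : 2 ≤ k := by omega
  have T := isSeparatedTree_of_labeling2 hk2 hL hI hE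
  have hX : ∀ {δ : Fin 3} {s : List Bool}, s.length = J → x (some (δ, s)) ∈ X :=
    fun hs => mem_of_isLabeling2 hL (show _ + 2 ≤ k by omega)
  have hd := length_lt_of_append_prefix hd₁
  have h₃γ := notMem_subtreeLabels_nil_of_ne hL (by omega : s₃.length + 2 ≤ k) hγ
  obtain ⟨hO, hin⟩ := (T γ).mem_interior_of_branch (J := J) (by omega) h₁ h₂ hd₁ hd₂
    (Nat.zero_le _) List.nil_prefix (hX h₃) h₃γ
  refine existsUnique_mem_image_inter (n₀ := some (γ, d))
    ⟨show d.length + 2 ≤ k by omega, show d.length + 2 ≤ J + 1 by omega⟩ hin ?_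
  rintro n ⟨hn, hlvl⟩ hnin
  obtain ⟨-, h₂₃, h₃₁⟩ := (mem_interior_triangle_iff hO).mp hnin
  by_cases hnγ : x n ∈ subtreeLabels (k - 2) (branchLabel x γ) []
  · obtain ⟨t, rfl⟩ := (mem_subtreeLabels_nil_iff hL hk2 hn).mp hnγ
    exact congrArg (branchLabel x γ) ((T γ).eq_of_mem_interior_of_branch (J := J) (by omega)
      h₁ h₂ hd₁ hd₂ (Nat.zero_le _) List.nil_prefix (hX h₃) h₃γ List.nil_prefix
      (Nat.zero_le _) (by simp only [level2] at hlvl; omega) hnin)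
  by_cases hnγ' : x n ∈ subtreeLabels (k - 2) (branchLabel x γ') []
  · obtain ⟨t, rfl⟩ := (mem_subtreeLabels_nil_iff hL hk2 hn).mp hnγ'
    exact absurd ⟨h₃₁, h₂₃⟩ ((T γ').not_inside_of_lone_vertex (t := s₃) (by omega)
      List.nil_prefix (hX h₁) (notMem_subtreeLabels_nil_of_ne hL (by omega) hγ.symm)
      (hX h₂) (notMem_subtreeLabels_nil_of_ne hL (by omega) hγ.symm) List.nil_prefix
      (Nat.zero_le _) (by simp only [level2] at hlvl; omega))
  -- the remaining labels lie outside both branches, where the root separation applies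
  have hA : x (some (γ, s₁)) ∈ subtreeLabels (k - 2) (branchLabel x γ) [] :=
    mem_subtreeLabels_of_prefix List.nil_prefix (by omega)
  have hB : x (some (γ, s₂)) ∈ subtreeLabels (k - 2) (branchLabel x γ) [] :=
    mem_subtreeLabels_of_prefix List.nil_prefix (by omega)
  have hC : x (some (γ', s₃)) ∈ subtreeLabels (k - 2) (branchLabel x γ') [] :=
    mem_subtreeLabels_of_prefix List.nil_prefix (by omega)
  simp only [branchLabel] at h₂₃ h₃₁
  rcases fin_three_eq_add_one_or hγ with rfl | rfl
  · have := InternalSep2.orient_pos hk2 hI hA hC (mem_of_isLabeling2 hL hn) hnγ hnγ'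
    linarith [orient_swap (x (some (γ, s₁))) (x (some (γ + 1, s₃))) (x n)]
  · have := InternalSep2.orient_pos hk2 hI hC hB (mem_of_isLabeling2 hL hn) hnγ' hnγ
    linarith [orient_swap (x (some (γ', s₃))) (x (some (γ' + 1, s₂))) (x n)]

lemma existsUnique_inside_of_two_branches (hk : J + 2 ≤ k) (hL : IsLabeling2 k X x)
    (hI : InternalSep2 k X x) (hE : ExternalSep2 k X x) {γ γ' : Fin 3} (hγ : γ' ≠ γ)
    {s₁ s₂ s₃ : List Bool} (h₁ : s₁.length = J) (h₂ : s₂.length = J) (h₃ : s₃.length = J)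
    (h₁₂ : s₁ ≠ s₂) :
    ∃! p, p ∈ x '' {u | ValidNode2 k u ∧ level2 u ≤ J + 1} ∩
      interior (convexHull ℝ {x (some (γ, s₁)), x (some (γ, s₂)), x (some (γ', s₃))}) := by
  obtain ⟨d, hd | hd⟩ := exists_inorderSplit h₁₂
  · obtain ⟨hd₁, hd₂⟩ := hd.branch_of_length_eq (h₁.trans h₂.symm)
    exact existsUnique_inside_of_two_branches_of_branch hk hL hI hE hγ h₁ h₂ h₃ hd₁ hd₂
  · obtain ⟨hd₂, hd₁⟩ := hd.branch_of_length_eq (h₂.trans h₁.symm)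
    rw [Set.insert_comm]
    exact existsUnique_inside_of_two_branches_of_branch hk hL hI hE hγ h₂ h₁ h₃ hd₂ hd₁

lemma existsUnique_inside_of_three_branches (hk : J + 2 ≤ k) (hL : IsLabeling2 k X x)
    (hI : InternalSep2 k X x) (hE : ExternalSep2 k X x) {γ : Fin 3} {s₁ s₂ s₃ : List Bool}
    (h₁ : s₁.length = J) (h₂ : s₂.length = J) (h₃ : s₃.length = J) :
    ∃! p, p ∈ x '' {u | ValidNode2 k u ∧ level2 u ≤ J + 1} ∩ interior (convexHull ℝ
      {x (some (γ, s₁)), x (some (γ + 1, s₂)), x (some (γ + 2, s₃))}) := by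
  have hk2 : 2 ≤ k := by omega
  obtain ⟨hne₁, hne₂, hne₃, hadd₁, hadd₂⟩ := fin_three_add_facts γ
  have hX : ∀ {δ : Fin 3} {s : List Bool}, s.length = J → x (some (δ, s)) ∈ X :=
    fun hs => mem_of_isLabeling2 hL (show _ + 2 ≤ k by omega)
  have hmem : ∀ {δ : Fin 3} {s : List Bool}, s.length = J →
      x (some (δ, s)) ∈ subtreeLabels (k - 2) (branchLabel x δ) [] :=
    fun hs => mem_subtreeLabels_of_prefix List.nil_prefix (by omega)
  have hnot : ∀ {δ δ' : Fin 3} {s : List Bool}, s.length = J → δ ≠ δ' →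
      x (some (δ, s)) ∉ subtreeLabels (k - 2) (branchLabel x δ') [] :=
    fun hs => notMem_subtreeLabels_nil_of_ne hL (by omega)
  have hroot : ∀ δ : Fin 3, x none ∉ subtreeLabels (k - 2) (branchLabel x δ) [] := fun δ => by
    simp [mem_subtreeLabels_nil_iff hL hk2 (n := none) trivial]
  have hrootX := mem_of_isLabeling2 hL (n := none) trivial
  have hO := InternalSep2.orient_pos hk2 hI (hmem h₁) (hmem h₂) (hX h₃) (hnot h₃ hne₂)
    (hnot h₃ hne₃)
  have hin : x none ∈ interior (convexHull ℝ
      {x (some (γ, s₁)), x (some (γ + 1, s₂)), x (some (γ + 2, s₃))}) := by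
    refine (mem_interior_triangle_iff hO).mpr ⟨?_, ?_, ?_⟩
    · exact InternalSep2.orient_pos hk2 hI (hmem h₁) (hmem h₂) hrootX (hroot _) (hroot _)
    · exact InternalSep2.orient_pos hk2 hI (i := γ + 1) (hmem h₂) (by rw [hadd₁]; exact hmem h₃)
        hrootX (hroot _) (hroot _)
    · exact InternalSep2.orient_pos hk2 hI (i := γ + 2) (hmem h₃) (by rw [hadd₂]; exact hmem h₁)
        hrootX (hroot _) (hroot _)
  refine existsUnique_mem_image_inter (n₀ := none) ⟨trivial, by simp [level2]⟩ hin ?_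
  rintro (_ | ⟨δ, w⟩) ⟨hn, hlvl⟩ hnin
  · rfl
  exfalso
  obtain ⟨h₁₂, h₂₃, h₃₁⟩ := (mem_interior_triangle_iff hO).mp hnin
  have hw : w.length < J := by simp only [level2] at hlvl; omega
  have T := isSeparatedTree_of_labeling2 hk2 hL hI hE δ
  rcases fin_three_eq_or γ δ with rfl | rfl | rfl
  · exact T.not_inside_of_lone_vertex (t := s₁) (by omega) List.nil_prefix (hX h₂)
      (hnot h₂ hne₁) (hX h₃) (hnot h₃ hne₂) List.nil_prefix (Nat.zero_le _) (by omega) ⟨h₁₂, h₃₁⟩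
  · exact T.not_inside_of_lone_vertex (t := s₂) (by omega) List.nil_prefix (hX h₃)
      (hnot h₃ hne₃) (hX h₁) (hnot h₁ hne₁.symm) List.nil_prefix (Nat.zero_le _) (by omega)
      ⟨h₂₃, h₁₂⟩
  · exact T.not_inside_of_lone_vertex (t := s₃) (by omega) List.nil_prefix (hX h₁)
      (hnot h₁ hne₂.symm) (hX h₂) (hnot h₂ hne₃.symm) List.nil_prefix (Nat.zero_le _) (by omega)
      ⟨h₃₁, h₂₃⟩

lemma existsUnique_inside_of_labeling2 (hk : J + 2 ≤ k) (hL : IsLabeling2 k X x)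
    (hI : InternalSep2 k X x) (hE : ExternalSep2 k X x) {γ₁ γ₂ γ₃ : Fin 3}
    {s₁ s₂ s₃ : List Bool} (h₁ : s₁.length = J) (h₂ : s₂.length = J) (h₃ : s₃.length = J)
    (hab : x (some (γ₁, s₁)) ≠ x (some (γ₂, s₂))) (hac : x (some (γ₁, s₁)) ≠ x (some (γ₃, s₃)))
    (hbc : x (some (γ₂, s₂)) ≠ x (some (γ₃, s₃))) :
    ∃! p, p ∈ x '' {u | ValidNode2 k u ∧ level2 u ≤ J + 1} ∩ interior (convexHull ℝ
      {x (some (γ₁, s₁)), x (some (γ₂, s₂)), x (some (γ₃, s₃))}) := by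
  have hne : ∀ {γ s s'}, x (some (γ, s)) ≠ x (some (γ, s')) → s ≠ s' := fun h hs => h (hs ▸ rfl)
  by_cases h₁₂ : γ₁ = γ₂
  · subst h₁₂
    by_cases h₁₃ : γ₁ = γ₃
    · subst h₁₃
      exact existsUnique_inside_of_one_branch hk hL hI hE h₁ h₂ h₃ (hne hab) (hne hac) (hne hbc)
    · exact existsUnique_inside_of_two_branches hk hL hI hE (Ne.symm h₁₃) h₁ h₂ h₃ (hne hab)
  by_cases h₁₃ : γ₁ = γ₃
  · subst h₁₃
    rw [Set.pair_comm]
    exact existsUnique_inside_of_two_branches hk hL hI hE (Ne.symm h₁₂) h₁ h₃ h₂ (hne hac)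
  by_cases h₂₃ : γ₂ = γ₃
  · subst h₂₃
    rw [Set.insert_comm, Set.pair_comm]
    exact existsUnique_inside_of_two_branches hk hL hI hE h₁₂ h₂ h₃ h₁ (hne hbc)
  rcases fin_three_cases h₁₂ h₁₃ h₂₃ with ⟨rfl, rfl⟩ | ⟨rfl, rfl⟩
  · exact existsUnique_inside_of_three_branches hk hL hI hE h₁ h₂ h₃
  · rw [Set.pair_comm]
    exact existsUnique_inside_of_three_branches hk hL hI hE h₁ h₃ h₂

lemma isNACS_of_labeling2 (hfin : X.Finite) (hne : X.Nonempty) (hgp : GenPos X)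
    (hk : HasLayers X k) (hL : IsLabeling2 k X x) (hN : Nested2 k X x)
    (hI : InternalSep2 k X x) (hE : ExternalSep2 k X x) : IsNACS X := by
  refine isNACS_of_level_labeling hfin hne hgp hk hL.1 hL.2 (fun u hu => ?_)
    (fun _ hj hjk => layer_eq_image_of_nested2 hN hj hjk) ?_
  · obtain _ | ⟨γ, s⟩ := u
    · have : k ≠ 0 := by rintro rfl; exact hne.ne_empty hk.1
      show 1 ≤ k
      omega
    · exact hu
  rintro j - hjk (_ | ⟨γ₁, s₁⟩) - (_ | ⟨γ₂, s₂⟩) - (_ | ⟨γ₃, s₃⟩) - h₁ h₂ h₃ hab hac hbc <;>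
    simp only [level2] at h₁ h₂ h₃
  case some.some.some =>
    subst h₁
    exact existsUnique_inside_of_labeling2 (by omega) hL hI hE rfl (by omega) (by omega)
      hab hac hbc
  -- only the root has level `1`
  all_goals first | exact absurd rfl hab | omega

end Labeling2

/-- (Theorem 2, (3) ⇒ (1).) A finite set in general position with exactly
`k` convex layers admitting a nested labeling that is both an internal and an external
separation is a nested almost convex set. -/
theorem labeling_sep_implies_nacs (X : Set Pt) (k : ℕ)
    (hfin : X.Finite) (hne : X.Nonempty) (hgp : GenPos X) (hk : HasLayers X k)
    (h : (∃ x : List Bool → Pt,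
            IsLabeling1 k X x ∧ Nested1 k X x ∧ InternalSep1 k X x ∧ ExternalSep1 k X x) ∨
         (∃ x : Node2 → Pt,
            IsLabeling2 k X x ∧ Nested2 k X x ∧ InternalSep2 k X x ∧ ExternalSep2 k X x)) :
    IsNACS X := by
  rcases h with ⟨x, hL, hN, hI, hE⟩ | ⟨x, hL, hN, hI, hE⟩
  · exact isNACS_of_labeling1 hfin hne hgp hk hL hN hI hE
  · exact isNACS_of_labeling2 hfin hne hgp hk hL hN hI hE
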